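/- Let p ≥ 2 and q > 1. For every a, b ∈ ℝ, J_q(a - b)·(J_p(a) - J_p(b)) ≥ (p-1)·(q/(p-2+q))^q · | |a|^{(p-2)/q} a - |b|^{(p-2)/q} b |^q, where J_r(t) = |t|^{r-2} t. -/

import Mathlib

noncomputable def J (r t : ℝ) : ℝ := |t| ^ (r - 2) * t

/-!
Both sides come from the identity `J r a - J r b = (r - 1) ∫_b^a |t|^(r-2) dt` (fundamental theorem
of calculus; `J r` is continuous and differentiable away from `0`). With `s = (p - 2) / q` one has
`|x|^s x = J (s + 2) x`, so for `b < a` the right-hand side equals `(p - 1) (∫_b^a |t|^s)^q`, while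
the left-hand side is `(p - 1) (a - b)^(q - 1) ∫_b^a (|t|^s)^q`; the two compare by Jensen's
inequality for `x ↦ x^q` on the average over `[b, a]`. The case `a < b` follows by symmetry.
-/

open Real MeasureTheory Set

lemma J_neg (r t : ℝ) : J r (-t) = -J r t := by
  simp [J]

lemma continuous_J {r : ℝ} (hr : 2 ≤ r) : Continuous (J r) :=
  (continuous_abs.rpow_const fun _ => Or.inr (by linarith)).mul continuous_id

lemma hasDerivAt_J (r : ℝ) {t : ℝ} (ht : t ≠ 0) :
    HasDerivAt (J r) ((r - 1) * |t| ^ (r - 2)) t := by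
  have habs : |t| ≠ 0 := abs_ne_zero.mpr ht
  refine (((hasDerivAt_abs ht).rpow_const (Or.inl habs)).mul (hasDerivAt_id t)).congr_deriv ?_
  rw [id, rpow_sub_one habs]
  field_simp
  linear_combination (r - 2) * sign_mul_self t

lemma J_sub_J_eq_integral {r : ℝ} (hr : 2 ≤ r) (a b : ℝ) :
    J r a - J r b = (r - 1) * ∫ t in b..a, |t| ^ (r - 2) := by
  rw [← intervalIntegral.integral_const_mul]
  refine (integral_eq_of_hasDerivAt_off_countable _ _ (countable_singleton 0)
    (continuous_J hr).continuousOn (fun t ht => hasDerivAt_J r ht.2) ?_).symm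
  exact (continuous_const.mul (continuous_abs.rpow_const fun _ => Or.inr (by linarith))
    ).intervalIntegrable _ _

lemma rpow_integral_le_mul_integral_rpow {f : ℝ → ℝ} {q a b : ℝ} (hq : 1 ≤ q)
    (hba : b < a) (hf : Continuous f) (hf0 : ∀ t, 0 ≤ f t) :
    (∫ t in b..a, f t) ^ q ≤ (a - b) ^ (q - 1) * ∫ t in b..a, f t ^ q := by
  have hfq : Continuous fun t => f t ^ q := hf.rpow_const fun _ => Or.inr (by linarith)
  have hjensen := (convexOn_rpow hq).map_set_average_le (μ := volume) (t := Ioc b a)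
    (continuousOn_id.rpow_const fun _ _ => Or.inr (by linarith)) isClosed_Ici
    (by simp [hba]) (by simp) (ae_of_all _ hf0) hf.integrableOn_Ioc hfq.integrableOn_Ioc
  simp only [setAverage_eq, ← intervalIntegral.integral_of_le hba.le,
    volume_real_Ioc_of_le hba.le, smul_eq_mul] at hjensen
  have hab : 0 < a - b := sub_pos.mpr hba
  have hI : 0 ≤ ∫ t in b..a, f t := intervalIntegral.integral_nonneg hba.le fun t _ => hf0 t
  rwa [mul_rpow (inv_nonneg.mpr hab.le) hI, inv_rpow hab.le, inv_mul_le_iff₀ (by positivity),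
    ← mul_assoc, ← div_eq_mul_inv, ← rpow_sub_one hab.ne'] at hjensen

lemma le_J_mul_J_sub_J_of_lt {p q a b : ℝ} (hp : 2 ≤ p) (hq : 1 ≤ q) (hba : b < a) :
    (p - 1) * (q / (p - 2 + q)) ^ q * |J ((p - 2) / q + 2) a - J ((p - 2) / q + 2) b| ^ q ≤
      J q (a - b) * (J p a - J p b) := by
  set s := (p - 2) / q with hs_def
  have hq0 : 0 < q := by linarith
  have hs : 0 ≤ s := div_nonneg (by linarith) hq0.le
  have hab : 0 < a - b := sub_pos.mpr hba
  set I := ∫ t in b..a, |t| ^ s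
  have hI : 0 ≤ I := intervalIntegral.integral_nonneg hba.le fun t _ => by positivity
  have hJs : J (s + 2) a - J (s + 2) b = (s + 1) * I := by
    rw [J_sub_J_eq_integral (by linarith), add_sub_cancel_right, show s + 2 - 1 = s + 1 by ring]
  have hJp : J p a - J p b = (p - 1) * ∫ t in b..a, (|t| ^ s) ^ q := by
    simp_rw [← rpow_mul (abs_nonneg _), hs_def, div_mul_cancel₀ _ hq0.ne']
    exact J_sub_J_eq_integral hp a b
  have hJq : J q (a - b) = (a - b) ^ (q - 1) := by
    rw [J, abs_of_pos hab, ← rpow_add_one hab.ne']; ring_nf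
  have hcoef : q / (p - 2 + q) * (s + 1) = 1 := by
    have : p - 2 + q ≠ 0 := by linarith
    rw [hs_def]; field_simp
  calc (p - 1) * (q / (p - 2 + q)) ^ q * |J (s + 2) a - J (s + 2) b| ^ q
      = (p - 1) * I ^ q := by
        rw [hJs, abs_of_nonneg (by positivity), mul_assoc,
          ← mul_rpow (by positivity) (by positivity), ← mul_assoc, hcoef, one_mul]
    _ ≤ (p - 1) * ((a - b) ^ (q - 1) * ∫ t in b..a, (|t| ^ s) ^ q) := by
        gcongr
        · linarith
        · exact rpow_integral_le_mul_integral_rpow hq hba (by fun_prop) fun t => by positivity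
    _ = J q (a - b) * (J p a - J p b) := by rw [hJq, hJp]; ring

theorem stmt_1 (p q : ℝ) (hp : 2 ≤ p) (hq : 1 < q) (a b : ℝ) :
    J q (a - b) * (J p a - J p b) ≥
      (p - 1) * (q / (p - 2 + q)) ^ q *
        |(|a| ^ ((p - 2) / q) * a - |b| ^ ((p - 2) / q) * b)| ^ q := by
  have hJ (x : ℝ) : |x| ^ ((p - 2) / q) * x = J ((p - 2) / q + 2) x := by
    rw [J, add_sub_cancel_right]
  simp only [hJ, ge_iff_le]
  rcases lt_trichotomy b a with hba | rfl | hab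
  · exact le_J_mul_J_sub_J_of_lt hp hq.le hba
  · simp [zero_rpow (by linarith : q ≠ 0)]
  · have h := le_J_mul_J_sub_J_of_lt (q := q) hp hq.le hab
    rwa [abs_sub_comm, ← neg_sub a b, J_neg, ← neg_sub (J p a), neg_mul_neg] at h
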